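/- As k → ∞ through the positive integers, s_k = 1 − √(2/k) + 2/k + O(k^{−3/2}) and t_k = 1 + √(2/k) + 2/k + O(k^{−3/2}); that is, the sequences s_k − (1 − √(2/k) + 2/k) and t_k − (1 + √(2/k) + 2/k) are O(k^{−3/2}). -/

import Mathlib

/-!
Put `u = 1 / k`. Then `s_k` and `t_k` are `c(u) ∓ r(u)` with `c(u) = exp (2u + u²)` and
`r(u) = √(exp (4u + 2u²) - exp (2u))`. The bound `|exp x - 1 - x| ≤ x²` gives
`c(u) = 1 + 2u + O(u²)` and `r(u)² = 2u + O(u²)`, and since `√` has derivative of size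
`u^(-1/2)` near `2u`, the second estimate becomes `r(u) = √(2u) + O(u^(3/2))`.
-/

/-- `s_k`, the square root of the left Mhaskar–Rakhmanov–Saff number. -/
noncomputable def sK (k : ℕ) : ℝ :=
  Real.exp ((2 * (k : ℝ) + 1) / (k : ℝ) ^ 2) -
    Real.sqrt (Real.exp ((4 * (k : ℝ) + 2) / (k : ℝ) ^ 2) - Real.exp (2 / (k : ℝ)))

/-- `t_k`, the square root of the right Mhaskar–Rakhmanov–Saff number. -/
noncomputable def tK (k : ℕ) : ℝ :=
  Real.exp ((2 * (k : ℝ) + 1) / (k : ℝ) ^ 2) +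
    Real.sqrt (Real.exp ((4 * (k : ℝ) + 2) / (k : ℝ) ^ 2) - Real.exp (2 / (k : ℝ)))

/-- The left edge `a_k = s_k²` of the support of the equilibrium measure. -/
noncomputable def aK (k : ℕ) : ℝ := (sK k) ^ 2

/-- The right edge `b_k = t_k²` of the support of the equilibrium measure. -/
noncomputable def bK (k : ℕ) : ℝ := (tK k) ^ 2

/-- The density `ψ_k` of the equilibrium measure for the Stieltjes–Wigert-type weight. -/
noncomputable def psiK (k : ℕ) (x : ℝ) : ℝ :=
  ((k : ℝ) ^ 2 / (2 * Real.pi * x)) *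
    Real.arctan (Real.sqrt ((bK k - x) * (x - aK k)) / (Real.sqrt (aK k * bK k) + x))

open Asymptotics Filter
open Real Topology

noncomputable def mrsCenter (u : ℝ) : ℝ := exp (2 * u + u ^ 2)

noncomputable def mrsRadius (u : ℝ) : ℝ := √(exp (4 * u + 2 * u ^ 2) - exp (2 * u))

-- Also true at `k = 0`, where every term is Lean's junk value `0`.
lemma mrs_exponents_eq (k : ℕ) :
    (2 * (k : ℝ) + 1) / (k : ℝ) ^ 2 = 2 * (k : ℝ)⁻¹ + (k : ℝ)⁻¹ ^ 2 ∧
      (4 * (k : ℝ) + 2) / (k : ℝ) ^ 2 = 4 * (k : ℝ)⁻¹ + 2 * (k : ℝ)⁻¹ ^ 2 ∧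
      2 / (k : ℝ) = 2 * (k : ℝ)⁻¹ := by
  rcases eq_or_ne (k : ℝ) 0 with hk | hk
  · simp [hk]
  · exact ⟨by field_simp, by field_simp, div_eq_mul_inv _ _⟩

lemma sK_eq (k : ℕ) : sK k = mrsCenter (k : ℝ)⁻¹ - mrsRadius (k : ℝ)⁻¹ := by
  obtain ⟨h₁, h₂, h₃⟩ := mrs_exponents_eq k
  rw [sK, mrsCenter, mrsRadius, h₁, h₂, h₃]

lemma tK_eq (k : ℕ) : tK k = mrsCenter (k : ℝ)⁻¹ + mrsRadius (k : ℝ)⁻¹ := by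
  obtain ⟨h₁, h₂, h₃⟩ := mrs_exponents_eq k
  rw [tK, mrsCenter, mrsRadius, h₁, h₂, h₃]

lemma abs_sqrt_sub_sqrt_le {a : ℝ} (ha : 0 < a) (d : ℝ) : |√d - √a| ≤ |d - a| / √a := by
  have hsa : 0 < √a := sqrt_pos.2 ha
  rw [le_div_iff₀ hsa]
  rcases le_total 0 d with hd | hd
  · calc |√d - √a| * √a ≤ |√d - √a| * (√d + √a) := by
          gcongr; exact le_add_of_nonneg_left (sqrt_nonneg d)
      _ = |d - a| := by
        rw [← abs_of_nonneg (by positivity : 0 ≤ √d + √a), ← abs_mul]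
        congr 1
        linear_combination sq_sqrt hd - sq_sqrt ha.le
  · rw [sqrt_eq_zero'.2 hd, zero_sub, abs_neg, abs_of_pos hsa, abs_of_nonpos (by linarith),
      mul_self_sqrt ha.le]
    linarith

lemma abs_mrsCenter_sub_le {u : ℝ} (hu0 : 0 ≤ u) (hu1 : u ≤ 1 / 6) :
    |mrsCenter u - (1 + 2 * u)| ≤ 6 * u ^ 2 := by
  have h := abs_exp_sub_one_sub_id_le (x := 2 * u + u ^ 2)
    (by rw [abs_of_nonneg (by positivity)]; nlinarith)
  have hc : (2 + u) ^ 2 ≤ 5 := by nlinarith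
  calc |mrsCenter u - (1 + 2 * u)| = |(exp (2 * u + u ^ 2) - 1 - (2 * u + u ^ 2)) + u ^ 2| := by
        rw [mrsCenter]; ring_nf
    _ ≤ u ^ 2 * (2 + u) ^ 2 + u ^ 2 := by
        refine (abs_add_le _ _).trans ?_
        rw [abs_sq]; linarith
    _ ≤ 6 * u ^ 2 := by nlinarith [mul_le_mul_of_nonneg_left hc (sq_nonneg u)]

lemma abs_exp_sub_exp_sub_two_mul_le {u : ℝ} (hu0 : 0 ≤ u) (hu1 : u ≤ 1 / 6) :
    |(exp (4 * u + 2 * u ^ 2) - exp (2 * u)) - 2 * u| ≤ 25 * u ^ 2 := by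
  have h₁ := abs_exp_sub_one_sub_id_le (x := 4 * u + 2 * u ^ 2)
    (by rw [abs_of_nonneg (by positivity)]; nlinarith)
  have h₂ := abs_exp_sub_one_sub_id_le (x := 2 * u)
    (by rw [abs_of_nonneg (by positivity)]; linarith)
  have hc : (4 + 2 * u) ^ 2 ≤ 19 := by nlinarith
  calc |(exp (4 * u + 2 * u ^ 2) - exp (2 * u)) - 2 * u|
      = |(exp (4 * u + 2 * u ^ 2) - 1 - (4 * u + 2 * u ^ 2)) - (exp (2 * u) - 1 - 2 * u)
          + 2 * u ^ 2| := by ring_nf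
    _ ≤ u ^ 2 * (4 + 2 * u) ^ 2 + (2 * u) ^ 2 + 2 * u ^ 2 := by
        refine (abs_add_le _ _).trans ?_
        rw [abs_of_nonneg (by positivity : 0 ≤ 2 * u ^ 2)]
        linarith [abs_sub (exp (4 * u + 2 * u ^ 2) - 1 - (4 * u + 2 * u ^ 2))
          (exp (2 * u) - 1 - 2 * u)]
    _ ≤ 25 * u ^ 2 := by nlinarith [mul_le_mul_of_nonneg_left hc (sq_nonneg u)]

lemma abs_mrsRadius_sub_le {u : ℝ} (hu0 : 0 < u) (hu1 : u ≤ 1 / 6) :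
    |mrsRadius u - √(2 * u)| ≤ 25 * (u * √u) := by
  have hsu : 0 < √u := sqrt_pos.2 hu0
  calc |mrsRadius u - √(2 * u)| ≤ 25 * u ^ 2 / √(2 * u) :=
        (abs_sqrt_sub_sqrt_le (by positivity) _).trans
          (div_le_div_of_nonneg_right (abs_exp_sub_exp_sub_two_mul_le hu0.le hu1) (sqrt_nonneg _))
    _ ≤ 25 * u ^ 2 / √u := by gcongr; linarith
    _ = 25 * (u * √u) := by
        field_simp
        exact (sq_sqrt hu0.le).symm

lemma isBigO_mrsCenter :
    (fun u => mrsCenter u - (1 + 2 * u)) =O[𝓝[>] 0] fun u => u * √u := by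
  refine IsBigO.of_bound 6 ?_
  filter_upwards [Ioo_mem_nhdsGT (by norm_num : (0 : ℝ) < 1 / 6)] with u ⟨hu0, hu1⟩
  rw [norm_eq_abs, norm_of_nonneg (by positivity)]
  calc |mrsCenter u - (1 + 2 * u)| ≤ 6 * u ^ 2 := abs_mrsCenter_sub_le hu0.le hu1.le
    _ ≤ 6 * (u * √u) := by rw [sq]; gcongr; exact le_sqrt_self_iff.2 (by linarith)

lemma isBigO_mrsRadius :
    (fun u => mrsRadius u - √(2 * u)) =O[𝓝[>] 0] fun u => u * √u := by
  refine IsBigO.of_bound 25 ?_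
  filter_upwards [Ioo_mem_nhdsGT (by norm_num : (0 : ℝ) < 1 / 6)] with u ⟨hu0, hu1⟩
  rw [norm_eq_abs, norm_of_nonneg (by positivity)]
  exact abs_mrsRadius_sub_le hu0 hu1.le

lemma rpow_neg_three_halves {x : ℝ} (hx : 0 ≤ x) :
    x ^ (-(3 : ℝ) / 2) = x⁻¹ * √x⁻¹ := by
  rw [sqrt_eq_rpow, ← rpow_neg_one, ← rpow_mul hx, ← rpow_add' hx (by norm_num)]
  norm_num

theorem mrs_numbers_asymptotics :
    (fun k : ℕ => sK k - (1 - Real.sqrt (2 / (k : ℝ)) + 2 / (k : ℝ))) =O[atTop]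
        (fun k : ℕ => ((k : ℝ)) ^ (-(3 : ℝ) / 2)) ∧
      (fun k : ℕ => tK k - (1 + Real.sqrt (2 / (k : ℝ)) + 2 / (k : ℝ))) =O[atTop]
        (fun k : ℕ => ((k : ℝ)) ^ (-(3 : ℝ) / 2)) := by
  have hu : Tendsto (fun k : ℕ => (k : ℝ)⁻¹) atTop (𝓝[>] 0) :=
    tendsto_inv_atTop_nhdsGT_zero.comp tendsto_natCast_atTop_atTop
  have hc := isBigO_mrsCenter.comp_tendsto hu
  have hr := isBigO_mrsRadius.comp_tendsto hu
  constructor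
  · refine (hc.sub hr).congr (fun k => ?_) (fun k => (rpow_neg_three_halves k.cast_nonneg).symm)
    simp only [Function.comp, sK_eq, div_eq_mul_inv]; ring
  · refine (hc.add hr).congr (fun k => ?_) (fun k => (rpow_neg_three_halves k.cast_nonneg).symm)
    simp only [Function.comp, tK_eq, div_eq_mul_inv]; ring
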